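/- Boundedness of the exponentially damped recursion for the PN backward statistic: let 0 < α < 1 and suppose (Γ^{(t)})_{t≥1} and (Λ^{(t)})_{t≥1} are sequences of nonnegative reals with Γ^{(t)} ≤ C₁² < 1/(1−α) and Λ^{(t)} ≤ C₁C₂, and suppose there exist K ∈ ℕ and C₅ > 0 with C₅ < 1/(1−α) such that for every t > K and every j with K ≤ j ≤ t, the average (1/j)·Σ_{k=0}^{j−1} Γ^{(t−k+1)} ≥ C₅/2. Then the sequence defined by ν^{(0)} = 0 and ν^{(t)} = (1 − (1−α)·Γ^{(t)})·ν^{(t−1)} + (1−α)·Λ^{(t)} is uniformly bounded: there is a constant C (depending only on α, C₁, C₂, C₅, K) with |ν^{(t)}| ≤ C for all t. -/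

import Mathlib

/-!
Unrolling the affine recursion gives
`ν^{(t)} = Σ_{m<t} (Π_{k<m} q^{(t-k)}) (1-α) Λ^{(t-m)}` with `q^{(s)} = 1 - (1-α) Γ^{(s)} ∈ [0, 1]`.
Since `1 - x ≤ e^{-x}`, each product is at most `exp (-(1-α) Σ_{k<m} Γ^{(t-k)})`, and the window
condition makes that exponent grow linearly in `m` once `m > K`. The products therefore decay
geometrically, so `|ν^{(t)}|` is bounded by `(1-α) C₁ C₂` times a convergent geometric series.
-/

open Finset Real

theorem linear_recurrence_eq_sum {R : Type*} [CommSemiring R] {a b x : ℕ → R}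
    (hx0 : x 0 = 0) (hx : ∀ t, x (t + 1) = a (t + 1) * x t + b (t + 1)) (t : ℕ) :
    x t = ∑ m ∈ range t, (∏ k ∈ range m, a (t - k)) * b (t - m) := by
  induction t with
  | zero => simp [hx0]
  | succ t ih =>
    rw [hx, ih, sum_range_succ', mul_sum]
    simp only [prod_range_succ', Nat.add_sub_add_right, range_zero, prod_empty, one_mul,
      Nat.sub_zero]
    congr 1
    exact sum_congr rfl fun m _ => by ring

theorem abs_linear_recurrence_le {a b x : ℕ → ℝ} {B : ℝ}
    (hx0 : x 0 = 0) (hx : ∀ t, x (t + 1) = a (t + 1) * x t + b (t + 1))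
    (ha : ∀ t, 0 ≤ a t) (hb : ∀ t, |b t| ≤ B) (t : ℕ) :
    |x t| ≤ B * ∑ m ∈ range t, ∏ k ∈ range m, a (t - k) := by
  rw [linear_recurrence_eq_sum hx0 hx, mul_sum]
  refine (abs_sum_le_sum_abs _ _).trans (sum_le_sum fun m _ => ?_)
  rw [abs_mul, abs_of_nonneg (prod_nonneg fun k _ => ha _), mul_comm]
  exact mul_le_mul_of_nonneg_right (hb _) (prod_nonneg fun k _ => ha _)

theorem sum_prod_le_of_trailing_sum_ge {a u : ℕ → ℝ} {s : ℝ} {N t : ℕ} (hs : 0 < s)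
    (ha0 : ∀ k, 0 ≤ a k) (ha : ∀ k, a k ≤ exp (-u k))
    (hu : ∀ m < t, s * ((m : ℝ) - N) ≤ ∑ k ∈ range m, u (t - k)) :
    ∑ m ∈ range t, ∏ k ∈ range m, a (t - k) ≤ exp (s * N) * (1 - exp (-s))⁻¹ := by
  have hprod : ∀ m ∈ range t, ∏ k ∈ range m, a (t - k) ≤ exp (s * N) * exp (-s) ^ m := by
    intro m hm
    calc ∏ k ∈ range m, a (t - k)
        ≤ ∏ k ∈ range m, exp (-u (t - k)) :=
          prod_le_prod (fun k _ => ha0 _) fun k _ => ha _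
      _ = exp (-∑ k ∈ range m, u (t - k)) := by rw [← exp_sum, sum_neg_distrib]
      _ ≤ exp (-(s * ((m : ℝ) - N))) := exp_le_exp.mpr (neg_le_neg (hu m (mem_range.mp hm)))
      _ = exp (s * N) * exp (-s) ^ m := by rw [← exp_nat_mul, ← exp_add]; ring_nf
  have hgeom : ∑ m ∈ range t, exp (-s) ^ m ≤ (1 - exp (-s))⁻¹ := by
    simpa [← range_eq_Ico] using geom_sum_Ico_le_of_lt_one (m := 0) (n := t)
      (exp_pos (-s)).le (exp_lt_one_iff.mpr (neg_neg_of_pos hs))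
  calc ∑ m ∈ range t, ∏ k ∈ range m, a (t - k)
      ≤ ∑ m ∈ range t, exp (s * N) * exp (-s) ^ m := sum_le_sum hprod
    _ = exp (s * N) * ∑ m ∈ range t, exp (-s) ^ m := (mul_sum _ _ _).symm
    _ ≤ exp (s * N) * (1 - exp (-s))⁻¹ := mul_le_mul_of_nonneg_left hgeom (exp_pos _).le

theorem window_sum_ge {Γ : ℕ → ℝ} {c : ℝ} {K t m : ℕ} (hΓ : ∀ t, 0 ≤ Γ t) (hc : 0 ≤ c)
    (hwindow : ∀ t > K, ∀ j, K ≤ j → j ≤ t →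
      c ≤ (1 / (j : ℝ)) * ∑ k ∈ range j, Γ (t - k + 1))
    (hmt : m < t) : c * ((m : ℝ) - (K + 1 : ℕ)) ≤ ∑ k ∈ range m, Γ (t - k) := by
  rcases le_or_gt m K with hmK | hKm
  · have hmK' : (m : ℝ) ≤ K := by exact_mod_cast hmK
    have hm : (m : ℝ) - (K + 1 : ℕ) ≤ 0 := by push_cast; linarith
    exact (mul_nonpos_of_nonneg_of_nonpos hc hm).trans (sum_nonneg fun k _ => hΓ _)
  · have hw := hwindow (t - 1) (by omega) m hKm.le (by omega)
    have hshift : ∑ k ∈ range m, Γ (t - 1 - k + 1) = ∑ k ∈ range m, Γ (t - k) :=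
      sum_congr rfl fun k hk => by rw [mem_range] at hk; congr 1; omega
    rw [hshift, one_div, inv_mul_eq_div, le_div_iff₀ (Nat.cast_pos.mpr (by omega))] at hw
    have : 0 ≤ c * (K + 1 : ℕ) := by positivity
    linarith

theorem pn_recursion_bounded_general (α C₁ C₂ C₅ : ℝ) (K : ℕ)
    (hα1 : α < 1)
    (Γ Λ ν : ℕ → ℝ)
    (hΓ : ∀ t, 0 ≤ Γ t ∧ Γ t ≤ C₁ ^ 2)
    (hC₁ : C₁ ^ 2 < 1 / (1 - α))
    (hΛ : ∀ t, 0 ≤ Λ t ∧ Λ t ≤ C₁ * C₂)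
    (hC₅0 : 0 < C₅)
    (hwindow : ∀ t > K, ∀ j, K ≤ j → j ≤ t →
      C₅ / 2 ≤ (1 / (j : ℝ)) * ∑ k ∈ Finset.range j, Γ (t - k + 1))
    (hν0 : ν 0 = 0)
    (hrec : ∀ t, ν (t + 1) = (1 - (1 - α) * Γ (t + 1)) * ν t + (1 - α) * Λ (t + 1)) :
    ∃ C : ℝ, ∀ t, |ν t| ≤ C := by
  have hβ : 0 < 1 - α := sub_pos.mpr hα1
  have hq : ∀ t, 0 ≤ 1 - (1 - α) * Γ t := fun t => by
    have := mul_le_mul_of_nonneg_left (hΓ t).2 hβ.le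
    have := (lt_div_iff₀ hβ).mp hC₁
    linarith
  have hb : ∀ t, |(1 - α) * Λ t| ≤ (1 - α) * (C₁ * C₂) := fun t => by
    rw [abs_of_nonneg (mul_nonneg hβ.le (hΛ t).1)]
    exact mul_le_mul_of_nonneg_left (hΛ t).2 hβ.le
  set s := (1 - α) * (C₅ / 2)
  have hdecay : ∀ t, ∑ m ∈ range t, ∏ k ∈ range m, (1 - (1 - α) * Γ (t - k)) ≤
      exp (s * (K + 1 : ℕ)) * (1 - exp (-s))⁻¹ := fun t =>
    sum_prod_le_of_trailing_sum_ge (u := fun k => (1 - α) * Γ k) (by positivity) hq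
      (fun k => one_sub_le_exp_neg _) fun m hm => by
        rw [← mul_sum, mul_assoc]
        exact mul_le_mul_of_nonneg_left
          (window_sum_ge (fun t => (hΓ t).1) (by positivity) hwindow hm) hβ.le
  refine ⟨(1 - α) * (C₁ * C₂) * (exp (s * (K + 1 : ℕ)) * (1 - exp (-s))⁻¹), fun t => ?_⟩
  calc |ν t|
      ≤ (1 - α) * (C₁ * C₂) * ∑ m ∈ range t, ∏ k ∈ range m, (1 - (1 - α) * Γ (t - k)) :=
        abs_linear_recurrence_le (a := fun t => 1 - (1 - α) * Γ t) hν0 hrec hq hb t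
    _ ≤ _ := mul_le_mul_of_nonneg_left (hdecay t) ((abs_nonneg _).trans (hb 0))

/-- Boundedness of the exponentially damped recursion for the PN backward
statistic: under bounds `0 ≤ Γ t ≤ C₁² < 1/(1−α)`, `0 ≤ Λ t ≤ C₁·C₂`, and a
window lower bound on averages of `Γ`, the recursion
`ν^{(t)} = (1 − (1−α)Γ^{(t)})·ν^{(t−1)} + (1−α)·Λ^{(t)}` with `ν^{(0)} = 0`
stays uniformly bounded. -/
theorem pn_recursion_bounded (α C₁ C₂ C₅ : ℝ) (K : ℕ)
    (hα0 : 0 < α) (hα1 : α < 1)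
    (Γ Λ ν : ℕ → ℝ)
    (hΓ : ∀ t, 0 ≤ Γ t ∧ Γ t ≤ C₁ ^ 2)
    (hC₁ : C₁ ^ 2 < 1 / (1 - α))
    (hΛ : ∀ t, 0 ≤ Λ t ∧ Λ t ≤ C₁ * C₂)
    (hC₅0 : 0 < C₅) (hC₅ : C₅ < 1 / (1 - α))
    (hwindow : ∀ t > K, ∀ j, K ≤ j → j ≤ t →
      C₅ / 2 ≤ (1 / (j : ℝ)) * ∑ k ∈ Finset.range j, Γ (t - k + 1))
    (hν0 : ν 0 = 0)
    (hrec : ∀ t, ν (t + 1) = (1 - (1 - α) * Γ (t + 1)) * ν t + (1 - α) * Λ (t + 1)) :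
    ∃ C : ℝ, ∀ t, |ν t| ≤ C :=
  pn_recursion_bounded_general α C₁ C₂ C₅ K hα1 Γ Λ ν hΓ hC₁ hΛ hC₅0 hwindow hν0 hrec
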